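/- Let F be a saturated fusion system on a finite abelian 2-group S. Then dim_{F₂} B(F)^× = s + 1, where s is the number of F-conjugacy classes of maximal subgroups of S. Moreover {−1} ∪ {tr^F_S(v_{M_1}), …, tr^F_S(v_{M_s})} is an F₂-basis of B(F)^×, where M_1, …, M_s are representatives of the F-conjugacy classes of maximal subgroups of S. -/

import Mathlib

namespace BurnsideFusion

/-! ### The Burnside ring, realized via marks inside the ghost ring -/

/-- The vector of marks of the transitive `G`-set `G/K`:
its value at `H ≤ G` is the number of `H`-fixed points of `G/K`. -/
noncomputable def markVector (G : Type*) [Group G] (K : Subgroup G) : Subgroup G → ℤ :=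
  fun H => (Nat.card {x : G ⧸ K // ∀ h : G, h ∈ H → h • x = x} : ℤ)

/-- The Burnside ring of `G`, realized (faithfully, via the injective mark homomorphism)
as the subring of the ghost ring `∏_{H ≤ G} ℤ` generated by the marks of the
transitive `G`-sets `G/K`.  The mark of an element `a` at `H` is just `a H`. -/
noncomputable def burnsideRing (G : Type*) [Group G] : Subring (Subgroup G → ℤ) :=
  Subring.closure (Set.range (markVector G))

/-- The unit group `B(G)^×` of the Burnside ring, as a set:
since every unit of `B(G)` has all marks `±1`, the units are exactly the
elements squaring to `1`. -/
def burnsideUnits (G : Type*) [Group G] : Set (Subgroup G → ℤ) :=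
  {b | b ∈ burnsideRing G ∧ b * b = 1}

/-- Restriction `B(G) → B(S)` for `S ≤ G`, on marks:
`(n_H)_{H ≤ G} ↦ (n_P)_{P ≤ S}`. -/
def resMark {G : Type*} [Group G] (S : Subgroup G) (b : Subgroup G → ℤ) :
    Subgroup ↥S → ℤ :=
  fun P => b (P.map S.subtype)

/-- The action of a (bijective) endomorphism `f` of `G` on the ghost ring, on marks:
`(f · b)_Q = b_{f⁻¹(Q)}`. -/
def autAct {G : Type*} [Group G] (f : G →* G) (b : Subgroup G → ℤ) : Subgroup G → ℤ :=
  fun Q => b (Q.comap f)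

/-- The elements of the Burnside ring fixed by a set `A` of automorphisms of `G`.
(For `A = Aut_F(P)` this is `B(P)^{Out_F(P)}`, since the inner automorphisms
act trivially on `B(P)`.) -/
def fixedBurnside (G : Type*) [Group G] (A : Set (MulAut G)) : Set (Subgroup G → ℤ) :=
  {b | b ∈ burnsideRing G ∧ ∀ α ∈ A, autAct α.toMonoidHom b = b}

/-- The units of the Burnside ring fixed by a set `A` of automorphisms of `G`. -/
def fixedUnits (G : Type*) [Group G] (A : Set (MulAut G)) : Set (Subgroup G → ℤ) :=
  {b | b ∈ burnsideUnits G ∧ ∀ α ∈ A, autAct α.toMonoidHom b = b}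

/-- The relative trace map `tr^Γ_Δ` on the (units of the) Burnside ring:
the product of `α · b` over a set of representatives `α` of the cosets `Γ/Δ`. -/
noncomputable def relTrace {G : Type*} [Group G] (Γ Δ : Subgroup (MulAut G))
    (b : Subgroup G → ℤ) : Subgroup G → ℤ :=
  ∏ᶠ c : ↥Γ ⧸ Δ.subgroupOf Γ, autAct ((Quotient.out c : ↥Γ) : MulAut G).toMonoidHom b

/-! ### Fusion systems -/

/-- The homomorphism `P → Q` induced by conjugation by `s`. -/
def conjMap {S : Type*} [Group S] (s : S) (P Q : Subgroup S)
    (h : ∀ x ∈ P, s * x * s⁻¹ ∈ Q) : ↥P →* ↥Q where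
  toFun x := ⟨s * ↑x * s⁻¹, h x x.2⟩
  map_one' := by ext; simp
  map_mul' x y := by ext; simp

/-- A fusion system `F` on a group `S`: a category whose objects are the subgroups
of `S` and whose morphisms are injective group homomorphisms, containing all the
homomorphisms induced by conjugation in `S`, and such that every morphism factors
as an isomorphism in `F` followed by an inclusion. -/
structure FusionSystem (S : Type*) [Group S] where
  /-- The set of `F`-morphisms `P → Q`. -/
  Hom : ∀ P Q : Subgroup S, Set (↥P →* ↥Q)
  /-- All morphisms are injective. -/
  inj : ∀ {P Q : Subgroup S} {f : ↥P →* ↥Q}, f ∈ Hom P Q → Function.Injective f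
  /-- `Hom_S(P,Q) ⊆ Hom_F(P,Q)`. -/
  conj_mem : ∀ (s : S) (P Q : Subgroup S) (h : ∀ x ∈ P, s * x * s⁻¹ ∈ Q),
    conjMap s P Q h ∈ Hom P Q
  /-- Morphisms compose. -/
  comp_mem : ∀ {P Q R : Subgroup S} {f : ↥P →* ↥Q} {g : ↥Q →* ↥R},
    f ∈ Hom P Q → g ∈ Hom Q R → g.comp f ∈ Hom P R
  /-- Every morphism factors as an isomorphism in `F` onto its image followed by an
  inclusion. -/
  factor_mem : ∀ {P Q : Subgroup S} {f : ↥P →* ↥Q}, f ∈ Hom P Q →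
    ∃ (R : Subgroup S) (_ : R ≤ Q) (e : ↥P ≃* ↥R), e.toMonoidHom ∈ Hom P R ∧
      ∀ x : ↥P, ((e x : ↥R) : S) = ((f x : ↥Q) : S)
  /-- Isomorphisms in `F` are invertible in `F`. -/
  isoinv_mem : ∀ {P Q : Subgroup S} (e : ↥P ≃* ↥Q),
    e.toMonoidHom ∈ Hom P Q → e.symm.toMonoidHom ∈ Hom Q P

namespace FusionSystem

variable {S : Type*} [Group S] (F : FusionSystem S)

/-- Two subgroups of `S` are `F`-conjugate (isomorphic in `F`). -/
def SubConj (P Q : Subgroup S) : Prop :=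
  ∃ f ∈ F.Hom P Q, Function.Surjective ⇑f

/-- Two elements of `S` are `F`-conjugate: some `F`-isomorphism `⟨x⟩ → ⟨y⟩` sends
`x` to `y`. -/
def ElemConj (x y : S) : Prop :=
  ∃ f ∈ F.Hom (Subgroup.zpowers x) (Subgroup.zpowers y),
    f ⟨x, Subgroup.mem_zpowers x⟩ = ⟨y, Subgroup.mem_zpowers y⟩

/-- A subgroup `P ≤ S` is strongly closed in `F` if the `F`-conjugacy class of every
element of `P` is contained in `P`. -/
def StronglyClosed (P : Subgroup S) : Prop :=
  ∀ x ∈ P, ∀ y : S, F.ElemConj x y → y ∈ P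

/-- A subgroup `P` is normal in `F`: every morphism `φ ∈ Hom_F(Q,R)` extends to a
morphism `ψ ∈ Hom_F(QP, RP)` with `ψ|_Q = φ` and `ψ(P) = P`. -/
def NormalIn (P : Subgroup S) : Prop :=
  ∀ (Q R : Subgroup S), ∀ φ ∈ F.Hom Q R,
    ∃ ψ ∈ F.Hom (Q ⊔ P) (R ⊔ P),
      (∀ (x : S) (hx : x ∈ Q),
        ((ψ ⟨x, Subgroup.mem_sup_left hx⟩ : ↥(R ⊔ P)) : S) = ((φ ⟨x, hx⟩ : ↥R) : S)) ∧
      (∀ (x : S) (hx : x ∈ P),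
        ((ψ ⟨x, Subgroup.mem_sup_right hx⟩ : ↥(R ⊔ P)) : S) ∈ P) ∧
      (∀ y ∈ P, ∃ (x : S) (hx : x ∈ P),
        ((ψ ⟨x, Subgroup.mem_sup_right hx⟩ : ↥(R ⊔ P)) : S) = y)

/-- `Aut_F(P)`: the group of `F`-automorphisms of `P`. -/
def AutF (P : Subgroup S) : Subgroup (MulAut ↥P) where
  carrier := {α | α.toMonoidHom ∈ F.Hom P P}
  one_mem' := by
    have h : ∀ x ∈ P, (1 : S) * x * (1 : S)⁻¹ ∈ P := fun x hx => by simpa using hx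
    have h1 := F.conj_mem 1 P P h
    have e : conjMap (1 : S) P P h = (1 : MulAut ↥P).toMonoidHom := by
      ext x; simp [conjMap]
    rwa [e] at h1
  mul_mem' := by
    intro α β hα hβ
    have h := F.comp_mem hβ hα
    have e : α.toMonoidHom.comp β.toMonoidHom = (α * β).toMonoidHom := rfl
    rwa [e] at h
  inv_mem' := by
    intro α hα
    exact F.isoinv_mem α hα

end FusionSystem

/-- The conjugation automorphism of `P` induced by an element of its normalizer. -/
def conjAut {S : Type*} [Group S] (P : Subgroup S) (s : ↥(Subgroup.normalizer (P : Set S))) : MulAut ↥P where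
  toFun x := ⟨(s : S) * ↑x * (s : S)⁻¹, (Subgroup.mem_normalizer_iff.mp s.2 ↑x).mp x.2⟩
  invFun x := ⟨(s : S)⁻¹ * ↑x * (s : S), by
    have h := (Subgroup.mem_normalizer_iff.mp ((Subgroup.normalizer (P : Set S)).inv_mem s.2) (↑x : S)).mp x.2
    simpa using h⟩
  left_inv x := by ext; simp; group
  right_inv x := by ext; simp; group
  map_mul' x y := by ext; simp

/-- The homomorphism `N_S(P) → Aut(P)` given by conjugation. -/
def conjAutHom {S : Type*} [Group S] (P : Subgroup S) : ↥(Subgroup.normalizer (P : Set S)) →* MulAut ↥P where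
  toFun := conjAut P
  map_one' := by ext x; simp [conjAut]
  map_mul' s t := by ext x; simp [conjAut]; group

/-- `Aut_S(P)`: the subgroup of `Aut(P)` of automorphisms induced by conjugation in `S`. -/
def AutS {S : Type*} [Group S] (P : Subgroup S) : Subgroup (MulAut ↥P) :=
  (conjAutHom P).range

end BurnsideFusion

namespace BurnsideFusion

variable {S : Type*} [Group S]

/-- The automorphism of `⊤ ≤ S` induced by an automorphism of `S`. -/
def topRestrict (α : MulAut S) : MulAut ↥(⊤ : Subgroup S) :=
  (Subgroup.topEquiv.trans α).trans Subgroup.topEquiv.symm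

theorem topRestrict_one : topRestrict (1 : MulAut S) = 1 := by
  ext x; simp [topRestrict]

theorem topRestrict_mul (α β : MulAut S) :
    topRestrict (α * β) = topRestrict α * topRestrict β := by
  ext x; simp [topRestrict]

theorem topRestrict_inv (α : MulAut S) :
    topRestrict α⁻¹ = (topRestrict α).symm := by
  ext x; simp [topRestrict, MulAut.inv_def]

/-- `Aut_F(S)`, realized as a subgroup of `Aut(S)`. -/
def FusionSystem.AutFS (F : FusionSystem S) : Subgroup (MulAut S) where
  carrier := {α | (topRestrict α).toMonoidHom ∈ F.Hom ⊤ ⊤}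
  one_mem' := by
    have h := (F.AutF ⊤).one_mem
    have h' : (1 : MulAut ↥(⊤ : Subgroup S)).toMonoidHom ∈ F.Hom ⊤ ⊤ := h
    simpa [Set.mem_setOf_eq, topRestrict_one] using h'
  mul_mem' := by
    intro α β hα hβ
    have h := F.comp_mem (hβ : (topRestrict β).toMonoidHom ∈ F.Hom ⊤ ⊤) hα
    have e : (topRestrict α).toMonoidHom.comp (topRestrict β).toMonoidHom
        = (topRestrict (α * β)).toMonoidHom := by
      rw [topRestrict_mul]; rfl
    rw [e] at h; exact h
  inv_mem' := by
    intro α hα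
    have h := F.isoinv_mem (topRestrict α) hα
    simpa [Set.mem_setOf_eq, topRestrict_inv] using h

end BurnsideFusion

namespace BurnsideFusion

variable {S : Type*} [Group S]

namespace FusionSystem

variable (F : FusionSystem S)

/-- `P` is fully normalized in `F`: its normalizer has maximal order in its
`F`-conjugacy class. -/
def FullyNormalized (P : Subgroup S) : Prop :=
  ∀ Q : Subgroup S, F.SubConj P Q → Nat.card ↥(Subgroup.normalizer (Q : Set S)) ≤ Nat.card ↥(Subgroup.normalizer (P : Set S))

/-- `P` is fully centralized in `F`: its centralizer has maximal order in its
`F`-conjugacy class. -/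
def FullyCentralized (P : Subgroup S) : Prop :=
  ∀ Q : Subgroup S, F.SubConj P Q →
    Nat.card ↥(Subgroup.centralizer (Q : Set S)) ≤ Nat.card ↥(Subgroup.centralizer (P : Set S))

/-- `P` is `F`-centric: every `F`-conjugate `Q` of `P` satisfies `C_S(Q) ≤ Q`. -/
def Centric (P : Subgroup S) : Prop :=
  ∀ Q : Subgroup S, F.SubConj P Q → Subgroup.centralizer (Q : Set S) ≤ Q

/-- `P` is fully `F`-automized: `Aut_S(P)` is a Sylow `p`-subgroup of `Aut_F(P)`. -/
def FullyAutomized (p : ℕ) (P : Subgroup S) : Prop :=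
  AutS P ≤ F.AutF P ∧ IsPGroup p ↥((AutS P).subgroupOf (F.AutF P)) ∧
    ¬ p ∣ ((AutS P).subgroupOf (F.AutF P)).index

end FusionSystem

/-- For an `F`-isomorphism `φ : P → Q`, the subset
`N_φ = { g ∈ N_S(P) | φ ∘ c_g ∘ φ⁻¹ ∈ Aut_S(Q) }` of `S`. -/
def NphiSet (P Q : Subgroup S) (φ : ↥P ≃* ↥Q) : Set S :=
  {g | ∃ hg : g ∈ Subgroup.normalizer (P : Set S), ∃ h : S, ∀ (x : S) (hx : x ∈ P),
    ((φ ⟨g * x * g⁻¹, (Subgroup.mem_normalizer_iff.mp hg x).mp hx⟩ : ↥Q) : S)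
      = h * ((φ ⟨x, hx⟩ : ↥Q) : S) * h⁻¹}

namespace FusionSystem

variable (F : FusionSystem S)

/-- `Q` is receptive in `F`: every `F`-isomorphism `φ : P → Q` extends to a morphism
in `F` defined on `N_φ`. -/
def Receptive (Q : Subgroup S) : Prop :=
  ∀ (P : Subgroup S) (φ : ↥P ≃* ↥Q), φ.toMonoidHom ∈ F.Hom P Q →
    ∃ T : Subgroup S, (T : Set S) = NphiSet P Q φ ∧
      ∃ ψ ∈ F.Hom T ⊤, ∀ (x : S) (hx : x ∈ P) (hx' : x ∈ T),
        ((ψ ⟨x, hx'⟩ : ↥(⊤ : Subgroup S)) : S) = ((φ ⟨x, hx⟩ : ↥Q) : S)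

/-- `F` is saturated: every `F`-conjugacy class of subgroups contains a fully
automized, receptive member. -/
def IsSaturated (p : ℕ) : Prop :=
  ∀ P : Subgroup S, ∃ Q : Subgroup S, F.SubConj P Q ∧ F.FullyAutomized p Q ∧ F.Receptive Q

end FusionSystem

theorem innRange_subgroupOf_normal (F : FusionSystem S) (P : Subgroup S) :
    (((MulAut.conj : ↥P →* MulAut ↥P).range).subgroupOf (F.AutF P)).Normal := by
  have h : ((MulAut.conj : ↥P →* MulAut ↥P).range).Normal := by
    constructor
    intro n hn g
    obtain ⟨x, rfl⟩ := hn
    refine ⟨g x, ?_⟩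
    ext y
    simp [MulAut.conj_apply, MulAut.inv_def, mul_assoc]
  exact h.subgroupOf _

/-- `Out_F(P) = Aut_F(P)/Inn(P)`. -/
def OutF (F : FusionSystem S) (P : Subgroup S) : Type _ :=
  ↥(F.AutF P) ⧸ ((MulAut.conj : ↥P →* MulAut ↥P).range.subgroupOf (F.AutF P))

noncomputable instance (F : FusionSystem S) (P : Subgroup S) : Group (OutF F P) :=
  letI := innRange_subgroupOf_normal F P
  QuotientGroup.Quotient.group _

/-- A strongly `p`-embedded subgroup: a proper subgroup `H < Γ` such that `p` divides
`|H|` and `p` does not divide `|H ∩ gHg⁻¹|` for every `g ∉ H`. -/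
def IsStronglyPEmbedded (p : ℕ) {Γ : Type*} [Group Γ] (H : Subgroup Γ) : Prop :=
  H ≠ ⊤ ∧ p ∣ Nat.card ↥H ∧
    ∀ g : Γ, g ∉ H → ¬ p ∣ Nat.card ↥(H ⊓ H.map (MulAut.conj g).toMonoidHom)

/-- `R` is `F`-essential: `R` is fully normalized, `F`-centric, and `Out_F(R)`
contains a strongly `p`-embedded subgroup. -/
def IsEssential (p : ℕ) (F : FusionSystem S) (R : Subgroup S) : Prop :=
  F.FullyNormalized R ∧ F.Centric R ∧
    ∃ H : Subgroup (OutF F R), IsStronglyPEmbedded p H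

/-- The Burnside ring `B(F)` of a fusion system: the subring of `B(S)` of elements
whose marks agree on `F`-conjugate subgroups. -/
noncomputable def FusionSystem.burnside (F : FusionSystem S) : Subring (Subgroup S → ℤ) where
  carrier := {b | b ∈ burnsideRing S ∧ ∀ P Q : Subgroup S, F.SubConj P Q → b P = b Q}
  zero_mem' := ⟨zero_mem _, fun _ _ _ => rfl⟩
  one_mem' := ⟨one_mem _, fun _ _ _ => rfl⟩
  add_mem' := fun ha hb => ⟨add_mem ha.1 hb.1, fun P Q h => by
    simp only [Pi.add_apply, ha.2 P Q h, hb.2 P Q h]⟩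
  mul_mem' := fun ha hb => ⟨mul_mem ha.1 hb.1, fun P Q h => by
    simp only [Pi.mul_apply, ha.2 P Q h, hb.2 P Q h]⟩
  neg_mem' := fun ha => ⟨neg_mem ha.1, fun P Q h => by
    simp only [Pi.neg_apply, ha.2 P Q h]⟩

/-- The unit group `B(F)^×` of the Burnside ring of a fusion system, as a set. -/
noncomputable def FusionSystem.burnsideUnits (F : FusionSystem S) : Set (Subgroup S → ℤ) :=
  {b | b ∈ F.burnside ∧ b * b = 1}

/-- `F`-conjugacy as an equivalence relation on the subgroups of `S`. -/
def fconjSetoid (F : FusionSystem S) : Setoid (Subgroup S) where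
  r := F.SubConj
  iseqv := by
    constructor
    · intro P
      refine ⟨conjMap 1 P P (fun x hx => by simpa using hx), F.conj_mem _ _ _ _, ?_⟩
      intro y; exact ⟨y, by ext; simp [conjMap]⟩
    · rintro P Q ⟨f, hf, hsurj⟩
      have hbij : Function.Bijective ⇑f := ⟨F.inj hf, hsurj⟩
      have he : (MulEquiv.ofBijective f hbij).toMonoidHom ∈ F.Hom P Q := by
        have : (MulEquiv.ofBijective f hbij).toMonoidHom = f := by ext x; rfl
        rwa [this]
      exact ⟨(MulEquiv.ofBijective f hbij).symm.toMonoidHom, F.isoinv_mem _ he,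
        (MulEquiv.ofBijective f hbij).symm.surjective⟩
    · rintro P Q R ⟨f, hf, hfs⟩ ⟨g, hg, hgs⟩
      exact ⟨g.comp f, F.comp_mem hf hg, hgs.comp hfs⟩

open Classical in
/-- The unit `v_M ∈ B(S)^×` attached to a maximal subgroup `M < S`:
its mark at `P` is `-1` if `P ≤ M` and `+1` otherwise. -/
noncomputable def vUnit (S : Type*) [Group S] (M : Subgroup S) : Subgroup S → ℤ :=
  fun P => if P ≤ M then -1 else 1

end BurnsideFusion

namespace BurnsideFusion

variable {G : Type*} [Group G]

/-- `S` is a Sylow `p`-subgroup of `G`. -/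
def IsSylow (p : ℕ) (S : Subgroup G) : Prop :=
  IsPGroup p ↥S ∧ ¬ p ∣ S.index

/-- `K` is a Sylow `p`-subgroup of `H` (both subgroups of an ambient group `G`). -/
def IsSylowIn (p : ℕ) (H K : Subgroup G) : Prop :=
  K ≤ H ∧ IsPGroup p ↥K ∧ ¬ p ∣ (K.subgroupOf H).index

/-- An element of the ghost ring of `S` has marks which agree on pairs of subgroups
of `S` that are conjugate by an element of `N ≤ G`.  For `N = ⊤` this is stability
for the Frobenius fusion system `F_S(G)`; for `N = N_G(S)` it is stability for
`F_S(N_G(S))`. -/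
def frobStable (S N : Subgroup G) (b : Subgroup ↥S → ℤ) : Prop :=
  ∀ P Q : Subgroup ↥S,
    (∃ g ∈ N, (P.map S.subtype).map (MulAut.conj g).toMonoidHom = Q.map S.subtype) →
    b P = b Q

/-- The Burnside ring `B(F_S(N))` of the fusion system on `S` induced by a subgroup
`N` of `G` containing `S`, as a subset of `B(S)`. -/
noncomputable def frobBurnside (S N : Subgroup G) : Set (Subgroup ↥S → ℤ) :=
  {b | b ∈ burnsideRing ↥S ∧ frobStable S N b}

/-- The unit group `B(F_S(N))^×`, as a set. -/
noncomputable def frobUnits (S N : Subgroup G) : Set (Subgroup ↥S → ℤ) :=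
  {b | b ∈ frobBurnside S N ∧ b * b = 1}

/-- Restriction `B(N) → B(S)` for `S ≤ N ≤ G`, on marks. -/
def resMark₂ (S N : Subgroup G) (b : Subgroup ↥N → ℤ) : Subgroup ↥S → ℤ :=
  fun P => b ((P.map S.subtype).subgroupOf N)

/-- Tensor induction `B(Ten^G_S) : B(S)^× → B(G)^×`, on marks: the mark of
`Ten^G_S b` at `H ≤ G` is the product over the double cosets `HgS` of the marks
`b_{(g⁻¹Hg ∩ S)}`. -/
noncomputable def tenInd (S : Subgroup G) (b : Subgroup ↥S → ℤ) : Subgroup G → ℤ :=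
  fun H => ∏ᶠ c : DoubleCoset.Quotient (H : Set G) (S : Set G),
    b ((H.comap (MulAut.conj (Quotient.out c)).toMonoidHom).subgroupOf S)

/-- `Aut_G(S)`: the automorphisms of `S ≤ G` induced by conjugation by elements
of `G` (as a set). -/
def autGSet (S : Subgroup G) : Set (MulAut ↥S) :=
  {α | ∃ g : G, ∀ x : ↥S, ((α x : ↥S) : G) = g * (x : G) * g⁻¹}

end BurnsideFusion

/-!
For abelian `S`, a unit of `B(S)` is determined by its marks at `S` and at the maximal
subgroups: if a unit has mark `1` there but mark `-1` at some `P`, choose `P` maximal with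
this property; Burnside's congruence `|S| ∣ ∑_{g ∈ S} u(P⟨g⟩)` then reads
`|S| ∣ |S| - 2|P|`, so `|S : P| ≤ 2`, which is impossible.

Saturation makes every `F`-isomorphism between subgroups of the abelian group `S` the
restriction of an element of `Aut_F(S)` (receptivity, with `N_φ = S`), and `Aut_F(S)` has
odd order. Hence `tr(v_M) = ∏_{α ∈ Aut_F(S)} v_{α(M)}` has mark `-1` at a maximal subgroup `N`
exactly when `N` is `F`-conjugate to `M`, so the marks at `S, M_1, …, M_s` of the `2^(s+1)`
elements `±∏_{i ∈ I} tr(v_{M_i})` take every possible combination of signs, and these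
elements are exactly the units of `B(F)`.
-/

namespace BurnsideFusion

open scoped Classical

section Marks

variable {S : Type*} [CommGroup S]

theorem smul_mk_eq_mk_iff {K : Subgroup S} {h g : S} : h • (g : S ⧸ K) = g ↔ h ∈ K := by
  rw [MulAction.Quotient.smul_coe, QuotientGroup.eq]
  simp

theorem markVector_apply (K P : Subgroup S) :
    markVector S K P = if P ≤ K then (K.index : ℤ) else 0 := by
  unfold markVector
  split_ifs with hPK
  · rw [Subgroup.index, Nat.card_congr (Equiv.subtypeUnivEquiv ?_)]
    rintro ⟨g⟩ h hh
    exact smul_mk_eq_mk_iff.mpr (hPK hh)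
  · obtain ⟨h, hP, hK⟩ := SetLike.not_le_iff_exists.mp hPK
    have : IsEmpty {x : S ⧸ K // ∀ h ∈ P, h • x = x} :=
      ⟨fun ⟨x, hx⟩ => by induction x using QuotientGroup.induction_on with
        | H g => exact hK (smul_mk_eq_mk_iff.mp (hx h hP))⟩
    simp

theorem markVector_top : markVector S ⊤ = 1 := by
  ext P
  simp [markVector_apply]

theorem markVector_mul_markVector (K L : Subgroup S) :
    ∃ n : ℕ, markVector S K * markVector S L = n • markVector S (K ⊓ L) := by
  obtain ⟨n, hn⟩ : (K ⊓ L).relIndex K ∣ L.index := by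
    rw [Subgroup.inf_relIndex_left]
    exact Subgroup.relIndex_dvd_index_of_normal L K
  have hindex : K.index * L.index = n * (K ⊓ L).index := by
    rw [← Subgroup.relIndex_mul_index inf_le_left, hn]
    ring
  refine ⟨n, funext fun P => ?_⟩
  by_cases hK : P ≤ K <;> by_cases hL : P ≤ L <;> simp [markVector_apply, hK, hL]
  exact_mod_cast hindex

theorem mem_span_markVector_of_mem_burnsideRing {b : Subgroup S → ℤ}
    (hb : b ∈ burnsideRing S) : b ∈ Submodule.span ℤ (Set.range (markVector S)) := by
  induction hb using Subring.closure_induction with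
  | mem x hx => exact Submodule.subset_span hx
  | zero => exact zero_mem _
  | one => exact Submodule.subset_span ⟨⊤, markVector_top⟩
  | add x y _ _ hx hy => exact add_mem hx hy
  | neg x _ hx => exact neg_mem hx
  | mul x y _ _ hx hy =>
    have hxy := Submodule.mul_mem_mul hx hy
    rw [Submodule.span_mul_span] at hxy
    refine Submodule.span_le.mpr ?_ hxy
    rintro _ ⟨_, ⟨K, rfl⟩, _, ⟨L, rfl⟩, rfl⟩
    obtain ⟨n, hn⟩ := markVector_mul_markVector K L
    simp only [hn]
    exact Submodule.smul_of_tower_mem _ n (Submodule.subset_span ⟨K ⊓ L, rfl⟩)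

theorem card_dvd_sum_apply_sup_zpowers [Fintype S] {b : Subgroup S → ℤ}
    (hb : b ∈ burnsideRing S) (P : Subgroup S) :
    (Nat.card S : ℤ) ∣ ∑ g : S, b (P ⊔ Subgroup.zpowers g) := by
  replace hb := mem_span_markVector_of_mem_burnsideRing hb
  induction hb using Submodule.span_induction with
  | mem x hx =>
    obtain ⟨K, rfl⟩ := hx
    by_cases hP : P ≤ K
    · have hsum :
          ∑ g : S, markVector S K (P ⊔ Subgroup.zpowers g) = Nat.card K * K.index := by
        simp [markVector_apply, hP, Finset.sum_ite, Nat.card_eq_fintype_card,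
          Fintype.card_subtype]
      rw [hsum, ← Nat.cast_mul, Subgroup.card_mul_index]
    · simp [markVector_apply, hP]
  | zero => simp
  | add x y _ _ hx hy => simpa [Finset.sum_add_distrib] using dvd_add hx hy
  | smul n x _ hx => simpa [Finset.mul_sum] using hx.mul_left n

end Marks

def involutions {A : Type*} [CommMonoid A] (R : Submonoid A) : Submonoid A where
  carrier := {b | b ∈ R ∧ b * b = 1}
  one_mem' := ⟨R.one_mem, mul_one 1⟩
  mul_mem' := fun ⟨ha, ha2⟩ ⟨hb, hb2⟩ =>
    ⟨R.mul_mem ha hb, by rw [mul_mul_mul_comm, ha2, hb2, one_mul]⟩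

theorem _root_.Subgroup.isCoatom_of_index_prime {G : Type*} [Group G] {H : Subgroup G}
    (h : H.index.Prime) : IsCoatom H := by
  refine ⟨fun hH => by simp [hH, Nat.not_prime_one] at h, fun K hK => ?_⟩
  have hmul := Subgroup.relIndex_mul_index hK.le
  obtain h1 | hp := (Nat.dvd_prime h).mp (Subgroup.index_dvd_of_le hK.le)
  · exact Subgroup.index_eq_one.mp h1
  · rw [hp, Nat.mul_eq_right h.ne_zero] at hmul
    exact absurd (Subgroup.relIndex_eq_one.mp hmul) hK.not_ge

section Units

theorem apply_eq_one_or_neg_one {G : Type*} [Group G] {u : Subgroup G → ℤ}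
    (hu : u ∈ burnsideUnits G) (P : Subgroup G) : u P = 1 ∨ u P = -1 :=
  mul_self_eq_one_iff.mp (congrFun hu.2 P)

variable {S : Type*} [CommGroup S] [Finite S]

theorem index_dvd_two_of_apply_eq_neg_one {u : Subgroup S → ℤ} (hu : u ∈ burnsideUnits S)
    {P : Subgroup S} (hP : u P = -1) (hgt : ∀ Q, P < Q → u Q = 1) : P.index ∣ 2 := by
  have := Fintype.ofFinite S
  have hval (g : S) : u (P ⊔ Subgroup.zpowers g) = 1 - if g ∈ P then 2 else 0 := by
    split_ifs with hg
    · rw [sup_eq_left.mpr (Subgroup.zpowers_le.mpr hg), hP]; norm_num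
    · rw [hgt _ (left_lt_sup.mpr (mt Subgroup.zpowers_le.mp hg))]; norm_num
  have hsum : ∑ g : S, u (P ⊔ Subgroup.zpowers g) = Nat.card S - 2 * Nat.card P := by
    simp [hval, Finset.sum_sub_distrib, Finset.sum_ite, Nat.card_eq_fintype_card,
      Fintype.card_subtype, mul_comm]
  have hdvd : ((Nat.card P * P.index : ℕ) : ℤ) ∣ Nat.card P * 2 := by
    have := card_dvd_sum_apply_sup_zpowers hu.1 P
    rw [hsum, dvd_sub_right dvd_rfl] at this
    rwa [Subgroup.card_mul_index, mul_comm]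
  push_cast at hdvd
  exact_mod_cast (mul_dvd_mul_iff_left (Nat.cast_ne_zero.mpr Nat.card_pos.ne')).mp hdvd

theorem eq_one_of_mem_burnsideUnits {u : Subgroup S → ℤ} (hu : u ∈ burnsideUnits S)
    (htop : u ⊤ = 1) (hcoatom : ∀ N, IsCoatom N → u N = 1) : u = 1 := by
  funext P
  induction P using WellFoundedGT.induction with
  | _ P ih =>
  refine (apply_eq_one_or_neg_one hu P).resolve_right fun hP => ?_
  obtain h1 | h2 :=
    (Nat.dvd_prime Nat.prime_two).mp (index_dvd_two_of_apply_eq_neg_one hu hP ih)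
  · rw [Subgroup.index_eq_one.mp h1, htop] at hP
    norm_num at hP
  · rw [hcoatom P (Subgroup.isCoatom_of_index_prime (h2 ▸ Nat.prime_two))] at hP
    norm_num at hP

theorem eq_of_mem_burnsideUnits {u v : Subgroup S → ℤ} (hu : u ∈ burnsideUnits S)
    (hv : v ∈ burnsideUnits S) (htop : u ⊤ = v ⊤)
    (hcoatom : ∀ N, IsCoatom N → u N = v N) : u = v := by
  have huv : u * v = 1 := by
    refine eq_one_of_mem_burnsideUnits ((involutions _).mul_mem hu hv) ?_ fun N hN => ?_
    · rw [Pi.mul_apply, htop]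
      exact congrFun hv.2 ⊤
    · rw [Pi.mul_apply, hcoatom N hN]
      exact congrFun hv.2 N
  calc u = u * (v * v) := by rw [hv.2, mul_one]
    _ = v := by rw [← mul_assoc, huv, one_mul]

end Units

theorem _root_.IsPGroup.index_eq_of_isCoatom {p : ℕ} [Fact p.Prime] {G : Type*} [CommGroup G]
    [Finite G] (hG : IsPGroup p G) {M : Subgroup G} (hM : IsCoatom M) : M.index = p := by
  have : IsSimpleOrder (Set.Ici M) := Set.isSimpleOrder_Ici_iff_isCoatom.mpr hM
  have : IsSimpleOrder (Subgroup (G ⧸ M)) :=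
    ((QuotientGroup.comapMk'OrderIso M).trans (OrderIso.refl (Set.Ici M))).isSimpleOrder
  have : Nontrivial (G ⧸ M) := Subgroup.nontrivial_iff.mp inferInstance
  have hprime : (Nat.card (G ⧸ M)).Prime :=
    CommGroup.is_simple_iff_prime_card.mp ⟨fun H _ => IsSimpleOrder.eq_bot_or_eq_top H⟩
  obtain ⟨n, hn⟩ := (hG.to_quotient M).exists_card_eq
  rw [hn] at hprime
  rw [Subgroup.index_eq_card, hn, ((Nat.Prime.pow_eq_iff hprime).mp rfl).1.symm]

section VUnit

open scoped Pointwise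

variable {G : Type*} [Group G]

theorem vUnit_mul_self (M : Subgroup G) : vUnit G M * vUnit G M = 1 := by
  ext P
  by_cases h : P ≤ M <;> simp [vUnit, h]

theorem comap_eq_inv_smul (α : MulAut G) (Q : Subgroup G) :
    Q.comap α.toMonoidHom = α⁻¹ • Q := by
  ext x
  rw [Subgroup.mem_inv_pointwise_smul_iff]
  rfl

theorem autAct_vUnit (α : MulAut G) (M : Subgroup G) :
    autAct α.toMonoidHom (vUnit G M) = vUnit G (α • M) := by
  ext Q
  simp only [autAct, vUnit, comap_eq_inv_smul, ← Subgroup.subset_pointwise_smul_iff]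

theorem vUnit_eq_one_sub_markVector {S : Type*} [CommGroup S] {M : Subgroup S}
    (hM : M.index = 2) : vUnit S M = 1 - markVector S M := by
  ext P
  by_cases h : P ≤ M <;> simp [vUnit, markVector_apply, h, hM]

theorem vUnit_mem_burnsideUnits {S : Type*} [CommGroup S] {M : Subgroup S}
    (hM : M.index = 2) : vUnit S M ∈ burnsideUnits S := by
  refine ⟨?_, vUnit_mul_self M⟩
  rw [vUnit_eq_one_sub_markVector hM]
  exact sub_mem (one_mem _) (Subring.subset_closure ⟨M, rfl⟩)

end VUnit

namespace FusionSystem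

open scoped Pointwise

section Group

variable {S : Type*} [Group S] {F : FusionSystem S}

theorem subConj_refl (F : FusionSystem S) (P : Subgroup S) : F.SubConj P P :=
  (fconjSetoid F).iseqv.refl P

theorem neg_one_mem_burnsideUnits (F : FusionSystem S) :
    (-1 : Subgroup S → ℤ) ∈ F.burnsideUnits :=
  ⟨neg_mem (one_mem _), by rw [neg_mul_neg, one_mul]⟩

theorem burnsideUnits_subset (F : FusionSystem S) :
    F.burnsideUnits ⊆ BurnsideFusion.burnsideUnits S :=
  fun _ hu => ⟨hu.1.1, hu.2⟩

theorem SubConj.symm {P Q : Subgroup S} (h : F.SubConj P Q) : F.SubConj Q P :=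
  (fconjSetoid F).iseqv.symm h

theorem SubConj.trans {P Q R : Subgroup S} (hPQ : F.SubConj P Q) (hQR : F.SubConj Q R) :
    F.SubConj P R :=
  (fconjSetoid F).iseqv.trans hPQ hQR

theorem subConj_smul {α : MulAut S} (hα : α ∈ F.AutFS) (P : Subgroup S) :
    F.SubConj P (α • P) := by
  have hincl : ∀ x ∈ P, (1 : S) * x * (1 : S)⁻¹ ∈ (⊤ : Subgroup S) := fun _ _ => trivial
  obtain ⟨R, -, e, he, hee⟩ := F.factor_mem (F.comp_mem (F.conj_mem 1 P ⊤ hincl) hα)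
  have heα (x : P) : (e x : S) = α x := by simp [hee, conjMap, topRestrict]
  have hR : R = α • P := by
    ext y
    rw [Subgroup.mem_smul_pointwise_iff_exists]
    refine ⟨fun hy => ?_, ?_⟩
    · obtain ⟨x, hx⟩ := e.surjective ⟨y, hy⟩
      exact ⟨x, x.2, by rw [MulAut.smul_def, ← heα, hx]⟩
    · rintro ⟨x, hx, rfl⟩
      rw [MulAut.smul_def, ← heα ⟨x, hx⟩]
      exact (e ⟨x, hx⟩).2
  exact hR ▸ ⟨e.toMonoidHom, he, e.surjective⟩

theorem exists_mem_autFS_of_mem_hom_top [Finite S] {ψ : (⊤ : Subgroup S) →* (⊤ : Subgroup S)}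
    (hψ : ψ ∈ F.Hom ⊤ ⊤) :
    ∃ β ∈ F.AutFS, ∀ x : S, β x = ψ ⟨x, Subgroup.mem_top x⟩ := by
  let e := MulEquiv.ofBijective ψ ((Finite.injective_iff_bijective (f := ψ)).mp (F.inj hψ))
  exact ⟨MulAut.congr Subgroup.topEquiv e, hψ, fun _ => rfl⟩

end Group

section CommGroup

variable {S : Type*} [CommGroup S] [Finite S] {F : FusionSystem S}

theorem Receptive.exists_mem_autFS_smul_eq {R : Subgroup S} (hR : F.Receptive R)
    {A : Subgroup S} (h : F.SubConj A R) : ∃ β ∈ F.AutFS, β • A = R := by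
  obtain ⟨f, hf, hfs⟩ := h
  let φ := MulEquiv.ofBijective f ⟨F.inj hf, hfs⟩
  obtain ⟨T, hT, ψ, hψ, hψφ⟩ := hR A φ hf
  have hTtop : T = ⊤ := by
    refine eq_top_iff.mpr fun g _ => ?_
    rw [← SetLike.mem_coe, hT]
    refine ⟨?_, 1, fun x hx => ?_⟩
    · simp [Subgroup.normalizer_eq_top_iff.mpr (Subgroup.normal_of_isMulCommutative A)]
    · simp [mul_inv_cancel_comm]
  subst hTtop
  obtain ⟨β, hβ, hβψ⟩ := exists_mem_autFS_of_mem_hom_top hψ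
  refine ⟨β, hβ, ?_⟩
  ext y
  rw [Subgroup.mem_smul_pointwise_iff_exists]
  refine ⟨?_, fun hy => ?_⟩
  · rintro ⟨x, hx, rfl⟩
    rw [MulAut.smul_def, hβψ, hψφ x hx]
    exact (φ ⟨x, hx⟩).2
  · obtain ⟨x, hx⟩ := φ.surjective ⟨y, hy⟩
    refine ⟨x, x.2, ?_⟩
    rw [MulAut.smul_def, hβψ, hψφ x x.2, hx]

theorem exists_mem_autFS_smul_eq {p : ℕ} (hF : F.IsSaturated p) {P Q : Subgroup S}
    (h : F.SubConj P Q) : ∃ α ∈ F.AutFS, α • P = Q := by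
  obtain ⟨R, hPR, -, hR⟩ := hF P
  obtain ⟨β, hβ, hβP⟩ := hR.exists_mem_autFS_smul_eq hPR
  obtain ⟨γ, hγ, hγQ⟩ := hR.exists_mem_autFS_smul_eq (h.symm.trans hPR)
  refine ⟨γ⁻¹ * β, mul_mem (inv_mem hγ) hβ, ?_⟩
  rw [mul_smul, hβP, ← hγQ, inv_smul_smul]

theorem not_dvd_card_autFS {p : ℕ} (hF : F.IsSaturated p) : ¬ p ∣ Nat.card F.AutFS := by
  obtain ⟨Q, ⟨f, hf, hfs⟩, ⟨-, -, hndvd⟩, -⟩ := hF ⊤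
  have hQ : Q = ⊤ := Subgroup.eq_top_of_card_eq Q <| by
    rw [← Nat.card_congr (Equiv.ofBijective f ⟨F.inj hf, hfs⟩), Subgroup.card_top]
  subst hQ
  have hAutS : AutS (⊤ : Subgroup S) = ⊥ := by
    refine eq_bot_iff.mpr fun α ⟨s, hs⟩ => ?_
    ext x
    simp [← hs, conjAutHom, conjAut, mul_inv_cancel_comm]
  rw [hAutS, Subgroup.bot_subgroupOf, Subgroup.index_bot] at hndvd
  have hcard : Nat.card F.AutFS = Nat.card (F.AutF ⊤) :=
    Nat.card_congr <| (MulAut.congr Subgroup.topEquiv.symm).toEquiv.subtypeEquiv fun _ => Iff.rfl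
  rwa [hcard]

end CommGroup

end FusionSystem

section Trace

open Finset
open scoped Pointwise

theorem _root_.MulAction.card_filter_smul_eq_smul {Γ X : Type*} [Group Γ] [Fintype Γ]
    [MulAction Γ X] [DecidableEq X] (β : Γ) (x : X) :
    #{α : Γ | α • x = β • x} = Nat.card (MulAction.stabilizer Γ x) := by
  rw [Nat.card_eq_fintype_card, Fintype.card_subtype]
  refine Finset.card_bij' (fun α _ => β⁻¹ * α) (fun α _ => β * α) ?_ ?_ ?_ ?_ <;>
    simp [mul_smul, inv_smul_eq_iff]

variable {G : Type*} [Group G]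

theorem isCoatom_smul (α : MulAut G) {M : Subgroup G} (hM : IsCoatom M) : IsCoatom (α • M) :=
  (α.mapSubgroup.isCoatom_iff M).mpr hM

theorem range_conj_eq_bot {S : Type*} [CommGroup S] :
    (MulAut.conj : S →* MulAut S).range = ⊥ := by
  refine eq_bot_iff.mpr fun α ⟨s, hs⟩ => ?_
  ext x
  simp [← hs, mul_inv_cancel_comm]

variable (Γ : Subgroup (MulAut G))

theorem relTrace_bot (b : Subgroup G → ℤ) :
    relTrace Γ ⊥ b = ∏ᶠ α : Γ, autAct (α : MulAut G).toMonoidHom b := by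
  have hmk : Function.Injective (QuotientGroup.mk : Γ → Γ ⧸ (⊥ : Subgroup Γ)) :=
    fun a b h => by simpa [inv_mul_eq_one] using QuotientGroup.eq.mp h
  unfold relTrace
  rw [Subgroup.bot_subgroupOf]
  refine (finprod_eq_of_bijective QuotientGroup.mk ⟨hmk, QuotientGroup.mk_surjective⟩
    fun α => ?_).symm
  rw [hmk (QuotientGroup.out_eq' (QuotientGroup.mk α))]

variable [Fintype Γ] {M : Subgroup G}

theorem relTrace_bot_vUnit :
    relTrace Γ ⊥ (vUnit G M) = ∏ α : Γ, vUnit G ((α : MulAut G) • M) := by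
  simp only [relTrace_bot, finprod_eq_prod_of_fintype, autAct_vUnit]

theorem relTrace_bot_vUnit_apply_smul (β : Γ) (P : Subgroup G) :
    relTrace Γ ⊥ (vUnit G M) ((β : MulAut G) • P) = relTrace Γ ⊥ (vUnit G M) P := by
  simp only [relTrace_bot_vUnit, Finset.prod_apply]
  refine Fintype.prod_equiv (Equiv.mulLeft β⁻¹) _ _ fun α => ?_
  simp [vUnit, mul_smul, Subgroup.pointwise_smul_subset_iff]

theorem relTrace_bot_vUnit_apply_top (hM : IsCoatom M) : relTrace Γ ⊥ (vUnit G M) ⊤ = 1 := by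
  simp only [relTrace_bot_vUnit, Finset.prod_apply]
  exact Finset.prod_eq_one fun α _ => by simp [vUnit, (isCoatom_smul α hM).1]

theorem relTrace_bot_vUnit_apply_of_isCoatom (hM : IsCoatom M) {N : Subgroup G}
    (hN : IsCoatom N) :
    relTrace Γ ⊥ (vUnit G M) N = (-1) ^ #{α : Γ | (α : MulAut G) • M = N} := by
  simp [relTrace_bot_vUnit, Finset.prod_apply, vUnit, hN.le_iff_eq (isCoatom_smul _ hM).1,
    Finset.prod_ite]

end Trace

section FusionTrace

open Finset FusionSystem
open scoped Pointwise

variable {S : Type*} [CommGroup S] [Finite S] {F : FusionSystem S} {M : Subgroup S}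

theorem relTrace_vUnit_apply_top (hM : IsCoatom M) :
    relTrace F.AutFS (MulAut.conj : S →* MulAut S).range (vUnit S M) ⊤ = 1 := by
  have := Fintype.ofFinite F.AutFS
  rw [range_conj_eq_bot, relTrace_bot_vUnit_apply_top _ hM]

theorem relTrace_vUnit_apply_of_isCoatom (hF : F.IsSaturated 2) (hM : IsCoatom M)
    {N : Subgroup S} (hN : IsCoatom N) :
    relTrace F.AutFS (MulAut.conj : S →* MulAut S).range (vUnit S M) N =
      if F.SubConj M N then -1 else 1 := by
  have := Fintype.ofFinite F.AutFS
  rw [range_conj_eq_bot, relTrace_bot_vUnit_apply_of_isCoatom _ hM hN]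
  split_ifs with hMN
  · obtain ⟨β, hβ, rfl⟩ := exists_mem_autFS_smul_eq hF hMN
    have hstab : #{α : F.AutFS | (α : MulAut S) • M = β • M} =
        Nat.card (MulAction.stabilizer F.AutFS M) :=
      MulAction.card_filter_smul_eq_smul (⟨β, hβ⟩ : F.AutFS) M
    rw [hstab]
    refine Odd.neg_one_pow (Nat.not_even_iff_odd.mp fun h => not_dvd_card_autFS hF ?_)
    exact h.two_dvd.trans (Subgroup.card_subgroup_dvd_card _)
  · have hzero : #{α : F.AutFS | (α : MulAut S) • M = N} = 0 :=
      card_eq_zero.mpr <| filter_eq_empty_iff.mpr fun α _ h => hMN (h ▸ subConj_smul α.2 M)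
    rw [hzero, pow_zero]

theorem relTrace_vUnit_mem_burnsideUnits (hS : IsPGroup 2 S) (hF : F.IsSaturated 2)
    (hM : IsCoatom M) :
    relTrace F.AutFS (MulAut.conj : S →* MulAut S).range (vUnit S M) ∈ F.burnsideUnits := by
  have := Fintype.ofFinite F.AutFS
  rw [range_conj_eq_bot]
  have hunit : relTrace F.AutFS ⊥ (vUnit S M) ∈ burnsideUnits S := by
    rw [relTrace_bot_vUnit]
    exact (involutions _).prod_mem fun α _ =>
      vUnit_mem_burnsideUnits (hS.index_eq_of_isCoatom (isCoatom_smul α hM))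
  refine ⟨⟨hunit.1, fun P Q hPQ => ?_⟩, hunit.2⟩
  obtain ⟨β, hβ, rfl⟩ := exists_mem_autFS_smul_eq hF hPQ
  exact (relTrace_bot_vUnit_apply_smul _ ⟨β, hβ⟩ P).symm

end FusionTrace

def signedProd {ι X : Type*} (t : ι → X → ℤ) (q : Bool × Finset ι) : X → ℤ :=
  (if q.1 then -1 else 1) * ∏ i ∈ q.2, t i

section Basis

open FusionSystem

variable {S : Type*} [Group S] {F : FusionSystem S} {s : ℕ}
  {M : Fin s → Subgroup S} {t : Fin s → Subgroup S → ℤ}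

theorem signedProd_mem_burnsideUnits (ht : ∀ i, t i ∈ F.burnsideUnits)
    (q : Bool × Finset (Fin s)) : signedProd t q ∈ F.burnsideUnits := by
  refine (involutions F.burnside.toSubmonoid).mul_mem ?_ (prod_mem fun i _ => ht i)
  cases q.1
  · exact one_mem _
  · exact F.neg_one_mem_burnsideUnits

theorem signedProd_apply_top (ht_top : ∀ i, t i ⊤ = 1) (q : Bool × Finset (Fin s)) :
    signedProd t q ⊤ = if q.1 then -1 else 1 := by
  rcases q with ⟨_ | _, q⟩ <;> simp [signedProd, Finset.prod_apply, ht_top]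

theorem signedProd_apply_of_subConj (hdist : ∀ i j, F.SubConj (M i) (M j) → i = j)
    (ht_coatom : ∀ i N, IsCoatom N → t i N = if F.SubConj (M i) N then -1 else 1)
    (q : Bool × Finset (Fin s)) {N : Subgroup S} (hN : IsCoatom N) {j : Fin s}
    (hjN : F.SubConj (M j) N) :
    signedProd t q N = (if q.1 then -1 else 1) * if j ∈ q.2 then -1 else 1 := by
  have hiff (i : Fin s) : F.SubConj (M i) N ↔ i = j :=
    ⟨fun hiN => hdist i j (hiN.trans hjN.symm), fun h => h ▸ hjN⟩
  have hprod : (∏ i ∈ q.2, t i) N = if j ∈ q.2 then -1 else 1 := by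
    simp only [Finset.prod_apply, ht_coatom _ _ hN, hiff, Finset.prod_ite_eq']
  rcases q with ⟨_ | _, q⟩ <;> simp [signedProd, hprod]

theorem signedProd_injective (hmax : ∀ i, IsCoatom (M i))
    (hdist : ∀ i j, F.SubConj (M i) (M j) → i = j) (ht_top : ∀ i, t i ⊤ = 1)
    (ht_coatom : ∀ i N, IsCoatom N → t i N = if F.SubConj (M i) N then -1 else 1) :
    Function.Injective (signedProd t) := by
  rintro ⟨b, q⟩ ⟨b', q'⟩ h
  have hb : b = b' := by
    have := congrFun h ⊤
    rw [signedProd_apply_top ht_top, signedProd_apply_top ht_top] at this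
    cases b <;> cases b' <;> simp_all
  subst hb
  refine Prod.ext rfl (Finset.ext fun j => ?_)
  have := congrFun h (M j)
  rw [signedProd_apply_of_subConj hdist ht_coatom _ (hmax j) (F.subConj_refl _),
    signedProd_apply_of_subConj hdist ht_coatom _ (hmax j) (F.subConj_refl _)] at this
  by_cases hj : j ∈ q <;> by_cases hj' : j ∈ q' <;> cases b <;> simp_all

end Basis

theorem range_signedProd {S : Type*} [CommGroup S] [Finite S] {F : FusionSystem S} {s : ℕ}
    {M : Fin s → Subgroup S} {t : Fin s → Subgroup S → ℤ}
    (hdist : ∀ i j, F.SubConj (M i) (M j) → i = j)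
    (hrep : ∀ N : Subgroup S, IsCoatom N → ∃ i, F.SubConj N (M i))
    (ht : ∀ i, t i ∈ F.burnsideUnits) (ht_top : ∀ i, t i ⊤ = 1)
    (ht_coatom : ∀ i N, IsCoatom N → t i N = if F.SubConj (M i) N then -1 else 1) :
    Set.range (signedProd t) = F.burnsideUnits := by
  refine Set.Subset.antisymm (Set.range_subset_iff.mpr (signedProd_mem_burnsideUnits ht))
    fun u hu => ?_
  have hu' := F.burnsideUnits_subset hu
  refine ⟨(decide (u ⊤ = -1), ({i | u (M i) ≠ u ⊤} : Finset (Fin s))),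
    eq_of_mem_burnsideUnits (F.burnsideUnits_subset (signedProd_mem_burnsideUnits ht _)) hu'
      ?_ ?_⟩
  · rw [signedProd_apply_top ht_top]
    rcases apply_eq_one_or_neg_one hu' ⊤ with h | h <;> simp [h]
  · intro N hN
    obtain ⟨j, hNj⟩ := hrep N hN
    rw [signedProd_apply_of_subConj hdist ht_coatom _ hN hNj.symm, hu.1.2 N (M j) hNj]
    rcases apply_eq_one_or_neg_one hu' ⊤ with h | h <;>
      rcases apply_eq_one_or_neg_one hu' (M j) with h' | h' <;> simp [h, h']

theorem statement18 {S : Type*} [CommGroup S] [Finite S] (hS : IsPGroup 2 S)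
    (F : FusionSystem S) (hF : F.IsSaturated 2)
    (s : ℕ) (M : Fin s → Subgroup S)
    (hmax : ∀ i, IsCoatom (M i))
    (hdist : ∀ i j, F.SubConj (M i) (M j) → i = j)
    (hrep : ∀ N : Subgroup S, IsCoatom N → ∃ i, F.SubConj N (M i)) :
    Nat.card ↥F.burnsideUnits = 2 ^ (s + 1) ∧
    ((-1 : Subgroup S → ℤ) ∈ F.burnsideUnits) ∧
    (∀ i, relTrace F.AutFS (MulAut.conj : S →* MulAut S).range (vUnit S (M i))
      ∈ F.burnsideUnits) ∧
    (∀ u ∈ F.burnsideUnits,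
      ∃! q : Bool × Finset (Fin s),
        u = (if q.1 then -1 else 1) *
          ∏ i ∈ q.2, relTrace F.AutFS (MulAut.conj : S →* MulAut S).range (vUnit S (M i))) := by
  set t := fun i => relTrace F.AutFS (MulAut.conj : S →* MulAut S).range (vUnit S (M i))
  have ht i : t i ∈ F.burnsideUnits := relTrace_vUnit_mem_burnsideUnits hS hF (hmax i)
  have ht_top i : t i ⊤ = 1 := relTrace_vUnit_apply_top (hmax i)
  have ht_coatom i N (hN : IsCoatom N) : t i N = if F.SubConj (M i) N then -1 else 1 :=
    relTrace_vUnit_apply_of_isCoatom hF (hmax i) hN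
  have hinj := signedProd_injective hmax hdist ht_top ht_coatom
  have hrange := range_signedProd hdist hrep ht ht_top ht_coatom
  refine ⟨?_, F.neg_one_mem_burnsideUnits, ht, fun u hu => ?_⟩
  · rw [← hrange, Nat.card_range_of_injective hinj]
    simp [Nat.card_eq_fintype_card, pow_succ, mul_comm]
  · obtain ⟨q, rfl⟩ := hrange ▸ hu
    exact ⟨q, rfl, fun q' h => hinj h.symm⟩

end BurnsideFusion
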